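/- arXiv:2301.00100 — 2 statements merged into one kernel-verified Lean document; each statement's English description precedes it below -/
import Mathlib

section
/- Let D : D(D) ⊂ H₁ → H₂ be a closed, densely defined operator. For every z ∈ ℂ \ {0}, the block operator 𝐃(z) = [[z, D^*],[D, −conj(z)]] : D(D) ⊕ D(D^*) → H₁ ⊕ H₂ is bijective. -/
/-- The block operator `𝐃(z) = [[z, D^*],[D, −conj z]]`. -/
noncomputable def blockFun {H₁ H₂ : Type*} [NormedAddCommGroup H₁] [InnerProductSpace ℂ H₁]
    [NormedAddCommGroup H₂] [InnerProductSpace ℂ H₂] [CompleteSpace H₁] [CompleteSpace H₂]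
    (D : H₁ →ₗ.[ℂ] H₂) (z : ℂ) (u : D.domain) (v : D.adjoint.domain) : H₁ × H₂ :=
  (z • (u : H₁) + D.adjoint v, D u - starRingEnd ℂ z • (v : H₂))

set_option maxHeartbeats 1000000 in
/-- Let `D : D(D) ⊂ H₁ → H₂` be a closed, densely defined operator.  For
every `z ∈ ℂ \ {0}`, the block operator `𝐃(z) = [[z, D^*],[D, −conj z]]` from
`D(D) ⊕ D(D^*)` to `H₁ ⊕ H₂` is bijective. -/
theorem stmt12 {H₁ H₂ : Type*} [NormedAddCommGroup H₁] [InnerProductSpace ℂ H₁]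
    [NormedAddCommGroup H₂] [InnerProductSpace ℂ H₂] [CompleteSpace H₁] [CompleteSpace H₂]
    (D : H₁ →ₗ.[ℂ] H₂)
    (hDense : Dense (D.domain : Set H₁))
    (hDense' : Dense (D.adjoint.domain : Set H₂))
    (hClosed : D.IsClosed)
    (z : ℂ) (hz : z ≠ 0) :
    Function.Bijective
      (fun w : D.domain × D.adjoint.domain => blockFun D z w.1 w.2) := by
  have hz' : starRingEnd ℂ z ≠ 0 := by
    simpa using hz
  have hFA : D.adjoint.IsFormalAdjoint D := LinearPMap.adjoint_isFormalAdjoint hDense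
  constructor
  · -- Injectivity
    intro w₁ w₂ hw
    simp only [blockFun, Prod.mk.injEq] at hw
    obtain ⟨h1, h2⟩ := hw
    set u : D.domain := w₁.1 - w₂.1 with hu
    set v : D.adjoint.domain := w₁.2 - w₂.2 with hv
    have e1 : (D.adjoint v : H₁) = -(z • (u : H₁)) := by
      rw [hv, LinearPMap.map_sub]
      push_cast [hu]
      rw [smul_sub]
      linear_combination (norm := module) h1
    have e2 : (D u : H₂) = starRingEnd ℂ z • (v : H₂) := by
      rw [hu, LinearPMap.map_sub]
      push_cast [hv]
      rw [smul_sub]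
      linear_combination (norm := module) h2
    have key := hFA v u
    rw [e1, e2, inner_neg_left, inner_smul_left, inner_smul_right] at key
    have hsum : (inner ℂ (u : H₁) (u : H₁) : ℂ) + inner ℂ (v : H₂) (v : H₂) = 0 := by
      have hmul : starRingEnd ℂ z *
          ((inner ℂ (u : H₁) (u : H₁) : ℂ) + inner ℂ (v : H₂) (v : H₂)) = 0 := by
        linear_combination -key
      rcases mul_eq_zero.mp hmul with h | h
      · exact absurd h hz'
      · exact h
    rw [inner_self_eq_norm_sq_to_K, inner_self_eq_norm_sq_to_K] at hsum
    have hre : (‖(u : H₁)‖ ^ 2 + ‖(v : H₂)‖ ^ 2 : ℝ) = 0 := by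
      exact_mod_cast congrArg Complex.re hsum
    have hu0 : (u : H₁) = 0 := by
      have : ‖(u : H₁)‖ = 0 := by nlinarith [norm_nonneg (u : H₁), norm_nonneg (v : H₂)]
      simpa using this
    have hv0 : (v : H₂) = 0 := by
      have : ‖(v : H₂)‖ = 0 := by nlinarith [norm_nonneg (u : H₁), norm_nonneg (v : H₂)]
      simpa using this
    have : u = 0 := Subtype.ext hu0
    have h1' : w₁.1 = w₂.1 := by rwa [hu, sub_eq_zero] at this
    have : v = 0 := Subtype.ext hv0
    have h2' : w₁.2 = w₂.2 := by rwa [hv, sub_eq_zero] at this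
    exact Prod.ext h1' h2'
  · -- Surjectivity
    intro p
    obtain ⟨a, b⟩ := p
    -- the continuous linear map (x, y) ↦ (x, conj z • y) from WithLp 2 (H₁ × H₂)
    set L : WithLp 2 (H₁ × H₂) →L[ℂ] H₁ × H₂ :=
      ((ContinuousLinearMap.id ℂ H₁).prodMap
        (starRingEnd ℂ z • ContinuousLinearMap.id ℂ H₂)).comp
        (WithLp.prodContinuousLinearEquiv 2 ℂ H₁ H₂).toContinuousLinearMap with hL
    have hLapp : ∀ q : WithLp 2 (H₁ × H₂), L q = (q.fst, starRingEnd ℂ z • q.snd) := fun q => rfl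
    set G : Submodule ℂ (WithLp 2 (H₁ × H₂)) := D.graph.comap (L : _ →ₗ[ℂ] _) with hG
    have hGmem : ∀ q : WithLp 2 (H₁ × H₂),
        q ∈ G ↔ (q.fst, starRingEnd ℂ z • q.snd) ∈ D.graph := fun q => Iff.rfl
    have hGclosed : IsClosed (G : Set (WithLp 2 (H₁ × H₂))) := by
      have : (G : Set (WithLp 2 (H₁ × H₂))) = L ⁻¹' (D.graph : Set (H₁ × H₂)) := rfl
      rw [this]
      exact hClosed.preimage L.continuous
    haveI : CompleteSpace G := hGclosed.completeSpace_coe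
    -- decompose the target vector
    set t : WithLp 2 (H₁ × H₂) :=
      (WithLp.equiv 2 (H₁ × H₂)).symm (z⁻¹ • a, (starRingEnd ℂ z)⁻¹ • b) with ht
    obtain ⟨g, hgG, h, hhG, hth⟩ := G.exists_add_mem_mem_orthogonal t
    -- the G-part gives u ∈ dom D
    rw [hGmem, LinearPMap.mem_graph_iff] at hgG
    obtain ⟨u, hu1, hu2⟩ := hgG
    -- the orthogonal part gives v ∈ dom D†
    have hinner : ∀ x : D.domain,
        (inner ℂ (-z • h.fst : H₁) (x : H₁) : ℂ) = (inner ℂ (h.snd : H₂) (D x : H₂) : ℂ) := by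
      intro x
      have hmem : ((WithLp.equiv 2 (H₁ × H₂)).symm
          ((x : H₁), (starRingEnd ℂ z)⁻¹ • (D x : H₂))) ∈ G := by
        rw [hGmem]
        have : starRingEnd ℂ z • (starRingEnd ℂ z)⁻¹ • (D x : H₂) = D x := by
          rw [smul_smul, mul_inv_cancel₀ hz', one_smul]
        simpa [this] using D.mem_graph x
      have h0 := (Submodule.mem_orthogonal G h).mp hhG _ hmem
      rw [WithLp.prod_inner_apply] at h0
      simp only [WithLp.equiv_symm_apply, WithLp.ofLp_toLp, WithLp.ofLp_fst, WithLp.ofLp_snd] at h0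
      rw [inner_smul_left] at h0
      have hconj : starRingEnd ℂ ((starRingEnd ℂ z)⁻¹) = z⁻¹ := by
        simp [map_inv₀]
      rw [hconj] at h0
      -- h0 : ⟪x, h.fst⟫ + z⁻¹ * ⟪D x, h.snd⟫ = 0
      field_simp at h0
      have hc := congrArg (starRingEnd ℂ) h0
      simp only [map_add, map_mul, map_zero, inner_conj_symm] at hc
      rw [inner_smul_left, map_neg]
      linear_combination -hc
    have hv2mem : h.snd ∈ D.adjoint.domain :=
      LinearPMap.mem_adjoint_domain_of_exists _ ⟨-z • h.fst, hinner⟩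
    have hv2 : D.adjoint ⟨h.snd, hv2mem⟩ = -z • h.fst :=
      LinearPMap.adjoint_apply_eq hDense _ hinner
    -- assemble the preimage
    refine ⟨⟨u, -⟨h.snd, hv2mem⟩⟩, ?_⟩
    have hsum1 : z⁻¹ • a = g.fst + h.fst := congrArg WithLp.fst hth
    have hsum2 : (starRingEnd ℂ z)⁻¹ • b = g.snd + h.snd := congrArg WithLp.snd hth
    simp only [blockFun]
    have hD1 : (D.adjoint (-⟨h.snd, hv2mem⟩) : H₁) = z • h.fst := by
      rw [LinearPMap.map_neg, hv2]; simp
    have hcoe : ((-⟨h.snd, hv2mem⟩ : D.adjoint.domain) : H₂) = -h.snd := rfl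
    rw [hD1, hcoe, hu1, hu2]
    rw [Prod.mk.injEq]
    constructor
    · have ha : z • (z⁻¹ • a) = a := by rw [smul_smul, mul_inv_cancel₀ hz, one_smul]
      rw [← ha, hsum1, smul_add]
    · have hb : starRingEnd ℂ z • ((starRingEnd ℂ z)⁻¹ • b) = b := by
        rw [smul_smul, mul_inv_cancel₀ hz', one_smul]
      rw [← hb, hsum2, smul_add]
      simp [smul_neg, sub_neg_eq_add]
end

section
/- Let D : D(D) ⊂ H₁ → H₂ be closed and densely defined, and let 𝐃(z) = [[z, D^*],[D, −conj(z)]] on E₀ = H₁ ⊕ H₂. Then sup over |z| ≥ 1 of |z|·‖𝐃(z)^{-1}‖_{L(E₀)} is finite. -/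
open scoped ComplexInnerProductSpace

theorem norm_smul_add_sq_add_norm_sub_conj_smul_sq {E F : Type*} [NormedAddCommGroup E]
    [InnerProductSpace ℂ E] [NormedAddCommGroup F] [InnerProductSpace ℂ F]
    {x b : E} {c y : F} (h : ⟪x, b⟫ = ⟪c, y⟫) (z : ℂ) :
    ‖z • x + b‖ ^ 2 + ‖c - starRingEnd ℂ z • y‖ ^ 2 =
      ‖z‖ ^ 2 * (‖x‖ ^ 2 + ‖y‖ ^ 2) + ‖b‖ ^ 2 + ‖c‖ ^ 2 := by
  rw [norm_add_sq (𝕜 := ℂ), norm_sub_sq (𝕜 := ℂ), inner_smul_left, inner_smul_right, h,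
    norm_smul, norm_smul, Complex.norm_conj]
  ring

section BlockOperator

variable {H₁ H₂ : Type*} [NormedAddCommGroup H₁] [InnerProductSpace ℂ H₁]
  [NormedAddCommGroup H₂] [InnerProductSpace ℂ H₂] [CompleteSpace H₁] [CompleteSpace H₂]
  {D : H₁ →ₗ.[ℂ] H₂}

theorem norm_sq_blockFun (hD : Dense (D.domain : Set H₁)) (z : ℂ) (u : D.domain)
    (v : D.adjoint.domain) :
    ‖(blockFun D z u v).1‖ ^ 2 + ‖(blockFun D z u v).2‖ ^ 2 =
      ‖z‖ ^ 2 * (‖(u : H₁)‖ ^ 2 + ‖(v : H₂)‖ ^ 2) + ‖D.adjoint v‖ ^ 2 + ‖D u‖ ^ 2 :=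
  norm_smul_add_sq_add_norm_sub_conj_smul_sq ((D.adjoint_isFormalAdjoint hD).symm u v).symm z

theorem norm_mul_le_norm_blockFun (hD : Dense (D.domain : Set H₁)) (z : ℂ) (u : D.domain)
    (v : D.adjoint.domain) :
    ‖z‖ * Real.sqrt (‖(u : H₁)‖ ^ 2 + ‖(v : H₂)‖ ^ 2) ≤
      Real.sqrt (‖(blockFun D z u v).1‖ ^ 2 + ‖(blockFun D z u v).2‖ ^ 2) :=
  calc ‖z‖ * Real.sqrt (‖(u : H₁)‖ ^ 2 + ‖(v : H₂)‖ ^ 2)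
      = Real.sqrt (‖z‖ ^ 2 * (‖(u : H₁)‖ ^ 2 + ‖(v : H₂)‖ ^ 2)) := by
        rw [Real.sqrt_mul (by positivity), Real.sqrt_sq (norm_nonneg z)]
    _ ≤ _ := Real.sqrt_le_sqrt <| by
        rw [norm_sq_blockFun hD]
        linarith [sq_nonneg ‖D.adjoint v‖, sq_nonneg ‖D u‖]

end BlockOperator

theorem stmt13_general {H₁ H₂ : Type*} [NormedAddCommGroup H₁] [InnerProductSpace ℂ H₁]
    [NormedAddCommGroup H₂] [InnerProductSpace ℂ H₂] [CompleteSpace H₁] [CompleteSpace H₂]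
    (D : H₁ →ₗ.[ℂ] H₂)
    (hDense : Dense (D.domain : Set H₁)) :
    ∃ C : ℝ, ∀ z : ℂ, 1 ≤ ‖z‖ → ∀ (u : D.domain) (v : D.adjoint.domain),
      ‖z‖ * Real.sqrt (‖(u : H₁)‖ ^ 2 + ‖(v : H₂)‖ ^ 2) ≤
        C * Real.sqrt (‖(blockFun D z u v).1‖ ^ 2 + ‖(blockFun D z u v).2‖ ^ 2) :=
  ⟨1, fun z _ u v => (one_mul (Real.sqrt _)).symm ▸ norm_mul_le_norm_blockFun hDense z u v⟩

/-- Let `D : D(D) ⊂ H₁ → H₂` be closed and densely defined, and let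
`𝐃(z) = [[z, D^*],[D, −conj z]]` on `E₀ = H₁ ⊕ H₂` (with the Hilbert space norm
`‖(a, b)‖² = ‖a‖² + ‖b‖²`).  Then `sup_{|z| ≥ 1} |z|·‖𝐃(z)⁻¹‖ < ∞`; equivalently there is a
constant `C` such that `|z|·‖w‖ ≤ C·‖𝐃(z) w‖` for all `|z| ≥ 1` and all `w ∈ D(D) ⊕ D(D^*)`. -/
theorem stmt13 {H₁ H₂ : Type*} [NormedAddCommGroup H₁] [InnerProductSpace ℂ H₁]
    [NormedAddCommGroup H₂] [InnerProductSpace ℂ H₂] [CompleteSpace H₁] [CompleteSpace H₂]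
    (D : H₁ →ₗ.[ℂ] H₂)
    (hDense : Dense (D.domain : Set H₁))
    (hDense' : Dense (D.adjoint.domain : Set H₂))
    (hClosed : D.IsClosed) :
    ∃ C : ℝ, ∀ z : ℂ, 1 ≤ ‖z‖ → ∀ (u : D.domain) (v : D.adjoint.domain),
      ‖z‖ * Real.sqrt (‖(u : H₁)‖ ^ 2 + ‖(v : H₂)‖ ^ 2) ≤
        C * Real.sqrt (‖(blockFun D z u v).1‖ ^ 2 + ‖(blockFun D z u v).2‖ ^ 2) :=
  stmt13_general D hDense
end
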